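/- Let M ⊆ ℝᵏ be closed with a locally finite partition into C¹ submanifolds (strata) such that limits of tangent spaces dominate: whenever a sequence yᵢ in a stratum S converges to a point x in a stratum S′ and T_{yᵢ}S converges to a subspace T, then T_xS′ ⊆ T. Fix a linear subspace P ⊆ ℝᵏ and an integer q ≥ 0, and suppose each stratum projects to P with constant rank. Then the union M(q,P) of all strata projecting to P with rank at most q is a closed set. -/

import Mathlib

open Filter

/-- `S ⊆ ℝᵏ` is an embedded `C¹` submanifold of dimension `d`. -/
def IsC1Submanifold (k d : ℕ) (S : Set (Fin k → ℝ)) : Prop :=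
  ∀ p ∈ S, ∃ (U : Set (Fin k → ℝ)) (V : Set (Fin d → ℝ))
      (φ : (Fin d → ℝ) → (Fin k → ℝ)),
    IsOpen U ∧ p ∈ U ∧ IsOpen V ∧ ContDiffOn ℝ 1 φ V ∧ φ '' V = S ∩ U ∧
    Set.InjOn φ V ∧
    ∀ v ∈ V, ∃ φ' : (Fin d → ℝ) →L[ℝ] (Fin k → ℝ),
      HasFDerivAt φ φ' v ∧ Function.Injective φ'

/-- The tangent space of `S` at `p`: velocities of `C¹` curves in `S` through `p`. -/
def tangentSpaceAt (k : ℕ) (S : Set (Fin k → ℝ)) (p : Fin k → ℝ) :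
    Set (Fin k → ℝ) :=
  {w | ∃ γ : ℝ → (Fin k → ℝ), (∀ t, γ t ∈ S) ∧ γ 0 = p ∧ HasDerivAt γ w 0}

/-- Convergence of a sequence of subsets (tangent spaces) to a limit set. -/
def SubsetLim {k : ℕ} (T : ℕ → Set (Fin k → ℝ)) (Tlim : Set (Fin k → ℝ)) : Prop :=
  (∀ w ∈ Tlim, ∃ ws : ℕ → (Fin k → ℝ), (∀ i, ws i ∈ T i) ∧
      Tendsto ws atTop (nhds w)) ∧
  ∀ (ws : ℕ → (Fin k → ℝ)) (w : Fin k → ℝ), (∀ i, ws i ∈ T i) →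
      Tendsto ws atTop (nhds w) → w ∈ Tlim

/-- The rank with which the tangent space of a stratum at `p` projects under the
linear projection `π`. -/
noncomputable def projRankAt {k : ℕ} (π : (Fin k → ℝ) →L[ℝ] (Fin k → ℝ))
    (S : Set (Fin k → ℝ)) (p : Fin k → ℝ) : ℕ :=
  Module.finrank ℝ (Submodule.span ℝ (π '' tangentSpaceAt k S p))

/-!
Rank of projection is lower semicontinuous along Whitney limits: if `yₘ → x` with `yₘ` in a
stratum `S` of projected rank `≤ q` and `x` in a stratum `S'`, then every vector of `T_x S'` is
a limit of tangent vectors at the `yₘ`, so `q + 1` independent vectors in `π(T_x S')` would be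
limits of `q + 1` vectors of `π(T_{yₘ} S)`, which are independent for large `m` since linear
independence is an open condition. Hence `S'` has projected rank `≤ q`, so the closure of each
low-rank stratum stays in `M(q,P)`, and local finiteness makes the closure of the union the
union of the closures.
-/

open Topology Set Module Submodule

theorem LocallyFinite.isClosed_biUnion_of_closure_subset {ι X : Type*} [TopologicalSpace X]
    {S : ι → Set X} (hS : LocallyFinite S) {s : Set ι}
    (h : ∀ i ∈ s, closure (S i) ⊆ ⋃ j ∈ s, S j) : IsClosed (⋃ i ∈ s, S i) := by
  rw [biUnion_eq_iUnion]
  refine isClosed_of_closure_subset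
    ((hS.comp_injective Subtype.val_injective).closure_iUnion.trans_subset ?_)
  exact iUnion_subset fun i => (h i i.2).trans (biUnion_eq_iUnion s fun j _ => S j).subset

theorem exists_linearIndependent_fin_subset_of_le_finrank_span {K V : Type*} [DivisionRing K]
    [AddCommGroup V] [Module K V] [Module.Finite K V] {A : Set V} {n : ℕ}
    (hn : n ≤ finrank K (span K A)) : ∃ f : Fin n → V, (∀ l, f l ∈ A) ∧ LinearIndependent K f := by
  obtain ⟨b, hbA, hb_span, hb_indep⟩ := exists_linearIndependent K A
  have : Fintype b := hb_indep.setFinite.fintype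
  rw [← hb_span, finrank_span_set_eq_card hb_indep, Set.toFinset_card] at hn
  obtain ⟨e⟩ : Nonempty (Fin n ↪ b) :=
    Function.Embedding.nonempty_of_card_le (by rwa [Fintype.card_fin])
  exact ⟨fun l => e l, fun l => hbA (e l).2, hb_indep.comp e e.injective⟩

def seqLimitSet {X : Type*} [TopologicalSpace X] (T : ℕ → Set X) : Set X :=
  {w | ∃ ws : ℕ → X, (∀ m, ws m ∈ T m) ∧ Tendsto ws atTop (𝓝 w)}

theorem subsetLim_seqLimitSet {k : ℕ} (T : ℕ → Set (Fin k → ℝ)) : SubsetLim T (seqLimitSet T) :=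
  ⟨fun _ hw => hw, fun ws _ hws hlim => ⟨ws, hws, hlim⟩⟩

theorem image_seqLimitSet_subset {X Y : Type*} [TopologicalSpace X] [TopologicalSpace Y]
    {f : X → Y} (hf : Continuous f) (T : ℕ → Set X) :
    f '' seqLimitSet T ⊆ seqLimitSet (fun m => f '' T m) := by
  rintro _ ⟨w, ⟨ws, hws, hlim⟩, rfl⟩
  exact ⟨f ∘ ws, fun m => mem_image_of_mem f (hws m), (hf.tendsto w).comp hlim⟩

theorem finrank_span_le_of_subset_seqLimitSet {𝕜 E : Type*} [NontriviallyNormedField 𝕜]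
    [CompleteSpace 𝕜] [NormedAddCommGroup E] [NormedSpace 𝕜 E] [FiniteDimensional 𝕜 E]
    {T : ℕ → Set E} {q : ℕ} (hT : ∀ m, finrank 𝕜 (span 𝕜 (T m)) ≤ q) {A : Set E}
    (hA : A ⊆ seqLimitSet T) : finrank 𝕜 (span 𝕜 A) ≤ q := by
  by_contra! hq
  obtain ⟨f, hfA, hf_indep⟩ := exists_linearIndependent_fin_subset_of_le_finrank_span hq
  choose ws hws hlim using fun l => hA (hfA l)
  have hconv : Tendsto (fun m l => ws l m) atTop (𝓝 f) := tendsto_pi_nhds.2 hlim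
  obtain ⟨m, hm⟩ := (hconv.eventually hf_indep.eventually).exists
  have hcard := linearIndependent_iff_card_le_finrank_span.1 hm
  have hle := Set.finrank_mono (K := 𝕜) (range_subset_iff.2 fun l => hws l m)
  rw [Fintype.card_fin] at hcard
  exact (hcard.trans (hle.trans (hT m))).not_gt q.lt_succ_self

theorem strata_low_rank_union_closed_general (k : ℕ) (M : Set (Fin k → ℝ))
    (hM : IsClosed M) (ι : Type) (S : ι → Set (Fin k → ℝ))
    (hcover : ⋃ i, S i = M)
    (hlf : LocallyFinite S)
    (π : (Fin k → ℝ) →L[ℝ] (Fin k → ℝ))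
    (r : ι → ℕ) (hrank : ∀ i, ∀ p ∈ S i, projRankAt π (S i) p = r i)
    (htangent : ∀ (i j : ι) (ys : ℕ → (Fin k → ℝ)) (x : Fin k → ℝ),
      (∀ m, ys m ∈ S i) → x ∈ S j → Tendsto ys atTop (nhds x) →
      ∀ T : Set (Fin k → ℝ), SubsetLim (fun m => tangentSpaceAt k (S i) (ys m)) T →
        tangentSpaceAt k (S j) x ⊆ T)
    (q : ℕ) :
    IsClosed (⋃ i ∈ {i : ι | r i ≤ q}, S i) := by
  refine hlf.isClosed_biUnion_of_closure_subset fun i hi x hx => ?_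
  obtain ⟨ys, hys, hlim⟩ := mem_closure_iff_seq_limit.1 hx
  have hxM : x ∈ M := hM.closure_subset_iff.2 (hcover ▸ subset_iUnion S i) hx
  obtain ⟨j, hxj⟩ := mem_iUnion.1 (hcover ▸ hxM)
  have hTx := htangent i j ys x hys hxj hlim _ (subsetLim_seqLimitSet _)
  refine mem_biUnion (x := j) ?_ hxj
  calc r j = projRankAt π (S j) x := (hrank j x hxj).symm
    _ ≤ q := finrank_span_le_of_subset_seqLimitSet (fun m => (hrank i _ (hys m)).trans_le hi)
      ((image_mono hTx).trans (image_seqLimitSet_subset π.continuous _))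

/-- let `M ⊆ ℝᵏ` be closed with a locally finite partition into `C¹`
strata satisfying the Whitney-type tangent condition (limits of tangent spaces
along a stratum dominate the tangent space of the limit stratum), and suppose
each stratum projects onto the subspace `P = range π` with constant rank
(`π` a linear projection, `π ∘ π = π`). Then for every `q ≥ 0`, the union
`M(q,P)` of the strata of projection rank at most `q` is closed. -/
theorem strata_low_rank_union_closed (k : ℕ) (M : Set (Fin k → ℝ))
    (hM : IsClosed M) (ι : Type) (S : ι → Set (Fin k → ℝ)) (d : ι → ℕ)
    (hsub : ∀ i, IsC1Submanifold k (d i) (S i))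
    (hdisj : Pairwise (Function.onFun Disjoint S))
    (hcover : ⋃ i, S i = M)
    (hlf : LocallyFinite S)
    (π : (Fin k → ℝ) →L[ℝ] (Fin k → ℝ)) (hproj : ∀ v, π (π v) = π v)
    (r : ι → ℕ) (hrank : ∀ i, ∀ p ∈ S i, projRankAt π (S i) p = r i)
    (htangent : ∀ (i j : ι) (ys : ℕ → (Fin k → ℝ)) (x : Fin k → ℝ),
      (∀ m, ys m ∈ S i) → x ∈ S j → Tendsto ys atTop (nhds x) →
      ∀ T : Set (Fin k → ℝ), SubsetLim (fun m => tangentSpaceAt k (S i) (ys m)) T →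
        tangentSpaceAt k (S j) x ⊆ T)
    (q : ℕ) :
    IsClosed (⋃ i ∈ {i : ι | r i ≤ q}, S i) :=
  strata_low_rank_union_closed_general k M hM ι S hcover hlf π r hrank htangent q
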